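/- arXiv:2404.08142 — 6 statements merged into one kernel-verified Lean document; each statement's English description precedes it below -/
import Mathlib

section
/- Let T(x) := sSup {T ∈ ℝ : T^3 − x·T − 2 = 0} denote the greatest real root of the cubic T^3 − x·T − 2. Then T(x) − √x = O(1/x) as x → +∞, i.e., the function x ↦ T(x) − Real.sqrt x is big-O of x ↦ 1/x along the filter atTop on ℝ. -/
/-!
With `a = √x` and `e = 2/x`, the cubic `f(T) = T³ - xT - 2` has `f(a) = -2` and, using `a² = x`,
`f(a + e) = 2 + 3ae² + e³ > 0`. Since `f` is increasing beyond `a`, every root lies below `a + e`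
and one lies in `[a, a + e]`, so the greatest root is within `2/x` of `√x`.
-/

open Filter Set

lemma cubic_lt_cubic_of_lt {x c b T : ℝ} (hb : 0 ≤ b) (hxb : x ≤ 3 * b ^ 2) (hbT : b < T) :
    b ^ 3 - x * b - c < T ^ 3 - x * T - c := by
  have hfactor : 0 < T ^ 2 + T * b + b ^ 2 - x := by nlinarith
  nlinarith [mul_pos (sub_pos.2 hbT) hfactor]

lemma cubic_sqrt_add_two_div_eq {x : ℝ} (hx : 0 < x) :
    (√x + 2 / x) ^ 3 - x * (√x + 2 / x) - 2 = 2 + 3 * √x * (2 / x) ^ 2 + (2 / x) ^ 3 := by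
  have hsq : √x ^ 2 = x := Real.sq_sqrt hx.le
  have hxe : x * (2 / x) = 2 := by field_simp
  linear_combination (√x + 3 * (2 / x)) * hsq + 2 * hxe

lemma sSup_roots_mem_Icc {x : ℝ} (hx : 0 < x) :
    sSup {T : ℝ | T ^ 3 - x * T - 2 = 0} ∈ Icc (√x) (√x + 2 / x) := by
  set a := √x
  set b := a + 2 / x
  have ha : 0 ≤ a := Real.sqrt_nonneg x
  have hab : a ≤ b := by simp only [b]; linarith [div_pos two_pos hx]
  have hxb : x ≤ 3 * b ^ 2 := by nlinarith [Real.sq_sqrt hx.le]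
  have hfa : a ^ 3 - x * a - 2 = -2 := by
    linear_combination a * Real.sq_sqrt hx.le
  have hfb : 0 < b ^ 3 - x * b - 2 := by
    rw [cubic_sqrt_add_two_div_eq hx]; positivity
  obtain ⟨r, hr, hroot⟩ : ∃ r ∈ Icc a b, r ^ 3 - x * r - 2 = 0 :=
    intermediate_value_Icc hab (by fun_prop) ⟨by linarith, hfb.le⟩
  have hbound : ∀ T ∈ {T : ℝ | T ^ 3 - x * T - 2 = 0}, T ≤ b := by
    intro T hT
    by_contra! hbT
    linarith [cubic_lt_cubic_of_lt (c := 2) (ha.trans hab) hxb hbT,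
      show T ^ 3 - x * T - 2 = 0 from hT]
  exact ⟨hr.1.trans (le_csSup ⟨b, hbound⟩ hroot), csSup_le ⟨r, hroot⟩ hbound⟩

/-- With `T(x) := sSup {T | T^3 - x T - 2 = 0}` the greatest real root,
`T(x) - √x = O(1/x)` as `x → +∞`. -/
theorem statement6 :
    (fun x : ℝ => sSup {T : ℝ | T ^ 3 - x * T - 2 = 0} - Real.sqrt x)
      =O[Filter.atTop] (fun x : ℝ => 1 / x) := by
  refine Asymptotics.IsBigO.of_bound 2 ?_
  filter_upwards [eventually_gt_atTop 0] with x hx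
  obtain ⟨hlower, hupper⟩ := sSup_roots_mem_Icc hx
  rw [Real.norm_eq_abs, Real.norm_of_nonneg (by positivity), abs_of_nonneg (by linarith)]
  linarith [show 2 / x = 2 * (1 / x) by ring]
end

section
/- Let T(x) := sSup {T ∈ ℝ : T^3 − x·T − 2 = 0} denote the greatest real root of the cubic T^3 − x·T − 2. Then T(x) + 2/x = O(1/x²) as x → −∞, i.e., the function x ↦ T(x) + 2/x is big-O of x ↦ 1/x² along the filter atBot on ℝ. -/
/-!
For `x < 0` the cubic `T ↦ T³ - xT - c` is strictly increasing, so it has exactly one real root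
`t`, and for `c ≥ 0` that root lies in `[0, c/(-x)]` because the cubic is `-c` at `0` and
`(c/(-x))³ ≥ 0` at `c/(-x)`. Dividing the equation by `x` gives `t + c/x = t³/x`, whence
`|t + c/x| ≤ c³/x⁴`.
-/

open Set Filter Asymptotics

noncomputable def depressedCubicMaxRoot (x c : ℝ) : ℝ :=
  sSup {T : ℝ | T ^ 3 - x * T - c = 0}

section

variable {x c : ℝ}

lemma strictMono_depressedCubic (hx : x ≤ 0) : StrictMono fun T : ℝ => T ^ 3 - x * T - c := by
  have hlin : Monotone fun T : ℝ => -x * T := fun a b hab => by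
    dsimp only
    nlinarith
  simpa [sub_eq_add_neg, neg_mul] using
    ((Odd.strictMono_pow (R := ℝ) (by decide : Odd 3)).add_monotone hlin).add_const (-c)

lemma exists_depressedCubic_root_mem_Icc (hx : x < 0) (hc : 0 ≤ c) :
    ∃ t ∈ Icc 0 (c / -x), t ^ 3 - x * t - c = 0 := by
  have hb : 0 ≤ c / -x := div_nonneg hc (by linarith)
  have hcont : ContinuousOn (fun T : ℝ => T ^ 3 - x * T - c) (Icc 0 (c / -x)) := by fun_prop
  have hend : (c / -x) ^ 3 - x * (c / -x) - c = (c / -x) ^ 3 := by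
    field_simp [hx.ne]
    ring
  refine intermediate_value_Icc hb hcont ⟨by simpa using hc, ?_⟩
  simp only [hend]
  positivity

lemma setOf_depressedCubic_root_eq_singleton (hx : x ≤ 0) {t : ℝ} (ht : t ^ 3 - x * t - c = 0) :
    {T : ℝ | T ^ 3 - x * T - c = 0} = {t} := by
  ext T
  refine ⟨fun hT => (strictMono_depressedCubic hx).injective (hT.trans ht.symm), ?_⟩
  rintro rfl
  exact ht

lemma abs_depressedCubicMaxRoot_add_div_le (hx : x < 0) (hc : 0 ≤ c) :
    |depressedCubicMaxRoot x c + c / x| ≤ c ^ 3 / x ^ 4 := by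
  obtain ⟨t, ⟨ht0, htb⟩, ht⟩ := exists_depressedCubic_root_mem_Icc hx hc
  have hroot : depressedCubicMaxRoot x c = t := by
    rw [depressedCubicMaxRoot, setOf_depressedCubic_root_eq_singleton hx.le ht, csSup_singleton]
  have hnx : 0 < -x := neg_pos.mpr hx
  have hdiv : t + c / x = -(t ^ 3 / -x) := by
    field_simp [hx.ne]
    linarith
  calc |depressedCubicMaxRoot x c + c / x| = t ^ 3 / -x := by
        rw [hroot, hdiv, abs_neg, abs_of_nonneg (by positivity)]
    _ ≤ (c / -x) ^ 3 / -x := by gcongr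
    _ = c ^ 3 / x ^ 4 := by
        field_simp [hx.ne]

end

/-- With `T(x) := sSup {T | T^3 - x T - 2 = 0}` the greatest real root,
`T(x) + 2/x = O(1/x²)` as `x → -∞`. -/
theorem statement7 :
    (fun x : ℝ => sSup {T : ℝ | T ^ 3 - x * T - 2 = 0} + 2 / x)
      =O[Filter.atBot] (fun x : ℝ => 1 / x ^ 2) := by
  refine IsBigO.of_bound 8 ?_
  filter_upwards [eventually_le_atBot (-1 : ℝ)] with x hx
  have hx2 : 1 ≤ x ^ 2 := by nlinarith
  calc ‖depressedCubicMaxRoot x 2 + 2 / x‖ ≤ 2 ^ 3 / x ^ 4 :=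
        abs_depressedCubicMaxRoot_add_div_le (by linarith) zero_le_two
    _ = 8 / x ^ 2 / x ^ 2 := by ring
    _ ≤ 8 / x ^ 2 := div_le_self (by positivity) hx2
    _ = 8 * ‖1 / x ^ 2‖ := by
        rw [Real.norm_of_nonneg (by positivity)]
        ring
end

section
/- Let x, S, Δ ∈ ℂ and set a := (S − Δ)/2 and b := (S + Δ)/2. Define r(z) := z·((z − a)(z − b)/z²)^(1/2) using the principal complex power, and g'(z) := i·(4z² + x)/2 − i·(S + 2z)·r(z). Then, as z → ∞ in ℂ (along the cobounded filter), g'(z) − i·(2S² + 2x + Δ²)/4 − i·S·Δ²/(4z) = O(1/z²), i.e., the function z ↦ g'(z) − i(2S²+2x+Δ²)/4 − iSΔ²/(4z) is big-O of z ↦ 1/z² along Filter.cobounded ℂ. -/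
set_option maxHeartbeats 1000000

open Filter Asymptotics Bornology Complex Topology


/-- With `a := (S-Δ)/2`, `b := (S+Δ)/2`,
`r(z) := z ((z-a)(z-b)/z²)^(1/2)` (principal power) and
`g'(z) := i(4z²+x)/2 - i(S+2z) r(z)`, one has
`g'(z) - i(2S²+2x+Δ²)/4 - iSΔ²/(4z) = O(1/z²)` as `z → ∞` (cobounded filter). -/
theorem statement10 (x S Δ : ℂ) (a b : ℂ)
    (ha : a = (S - Δ) / 2) (hb : b = (S + Δ) / 2)
    (r : ℂ → ℂ) (hr : ∀ z : ℂ, r z = z * (((z - a) * (z - b)) / z ^ 2) ^ ((1 : ℂ)/2))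
    (g' : ℂ → ℂ)
    (hg' : ∀ z : ℂ, g' z = Complex.I * (4 * z ^ 2 + x) / 2 - Complex.I * (S + 2 * z) * r z) :
    (fun z : ℂ => g' z - Complex.I * (2 * S ^ 2 + 2 * x + Δ ^ 2) / 4
        - Complex.I * S * Δ ^ 2 / (4 * z))
      =O[Bornology.cobounded ℂ] (fun z : ℂ => 1 / z ^ 2) := by
  set cob := Bornology.cobounded ℂ with hcob
  set q : ℂ → ℂ := fun z => z - S/2 - Δ^2/(8*z) - S*Δ^2/(16*z^2) with hq
  set w : ℂ → ℂ := fun z => ((z - a) * (z - b)) / z ^ 2 with hw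
  have hinv : Tendsto (fun z : ℂ => z⁻¹) cob (𝓝 0) := tendsto_inv₀_cobounded
  have hne : ∀ᶠ z : ℂ in cob, z ≠ 0 := eventually_ne_cobounded 0
  -- w → 1
  have hwt : Tendsto w cob (𝓝 1) := by
    have hc : Continuous (fun u : ℂ => (1 - a * u) * (1 - b * u)) := by fun_prop
    have h1 : Tendsto (fun z : ℂ => (1 - a * z⁻¹) * (1 - b * z⁻¹)) cob (𝓝 1) := by
      have h2 := (hc.tendsto 0).comp hinv
      have h3 : ((1 - a * 0) * (1 - b * 0) : ℂ) = 1 := by norm_num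
      rw [h3] at h2
      exact h2
    refine h1.congr' ?_
    filter_upwards [hne] with z hz
    simp only [hw]
    linear_combination (-1 + (a + b) * z⁻¹ - z * z⁻¹) * mul_inv_cancel₀ hz
  -- r z / z → 1
  have hrt : Tendsto (fun z : ℂ => r z * z⁻¹) cob (𝓝 1) := by
    have hc : ContinuousAt (fun u : ℂ => u ^ ((1:ℂ)/2)) 1 :=
      continuousAt_cpow_const (by simp)
    have h2 : Tendsto (fun z : ℂ => (w z) ^ ((1:ℂ)/2)) cob (𝓝 1) := by
      have := hc.tendsto.comp hwt
      simpa [Function.comp_def] using this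
    refine h2.congr' ?_
    filter_upwards [hne] with z hz
    rw [hr]
    rw [mul_comm z, mul_assoc, mul_inv_cancel₀ hz, mul_one]
  -- q z / z → 1
  have hqt : Tendsto (fun z : ℂ => q z * z⁻¹) cob (𝓝 1) := by
    have hc : Continuous (fun u : ℂ => 1 - S/2 * u - Δ^2/8 * u^2 - S*Δ^2/16 * u^3) := by
      fun_prop
    have h1 : Tendsto (fun z : ℂ => 1 - S/2 * z⁻¹ - Δ^2/8 * z⁻¹^2 - S*Δ^2/16 * z⁻¹^3)
        cob (𝓝 1) := by
      have h2 := (hc.tendsto 0).comp hinv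
      have h3 : (1 - S/2 * 0 - Δ^2/8 * 0^2 - S*Δ^2/16 * 0^3 : ℂ) = 1 := by norm_num
      rw [h3] at h2
      exact h2
    refine h1.congr' ?_
    filter_upwards [hne] with z hz
    simp only [hq]
    linear_combination (-1 : ℂ) * mul_inv_cancel₀ hz
  -- (r+q)/z → 2
  have hrq : Tendsto (fun z : ℂ => (r z + q z) * z⁻¹) cob (𝓝 2) := by
    have h := hrt.add hqt
    norm_num at h
    exact h.congr fun z => by ring
  have hrqne : ∀ᶠ z : ℂ in cob, r z + q z ≠ 0 := by
    filter_upwards [hrq.eventually_ne (by norm_num : (2:ℂ) ≠ 0), hne] with z h1 h2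
    intro h; rw [h] at h1; simp at h1
  have hwne : ∀ᶠ z : ℂ in cob, w z ≠ 0 := hwt.eventually_ne one_ne_zero
  -- r² = (z-a)(z-b) eventually
  have hr2 : ∀ᶠ z : ℂ in cob, r z ^ 2 = (z - a) * (z - b) := by
    filter_upwards [hne, hwne] with z hz hwz
    have h5 : (w z) ^ ((1:ℂ)/2) * (w z) ^ ((1:ℂ)/2) = w z := by
      rw [← Complex.cpow_add _ _ hwz]; norm_num
    rw [hr]
    calc (z * (w z) ^ ((1:ℂ)/2)) ^ 2 = z ^ 2 * ((w z) ^ ((1:ℂ)/2) * (w z) ^ ((1:ℂ)/2)) := by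
          ring
      _ = z ^ 2 * w z := by rw [h5]
      _ = (z - a) * (z - b) := by
          rw [hw]
          linear_combination ((z - a) * (z - b) * (z * z⁻¹ + 1)) * mul_inv_cancel₀ hz
  -- basic IsBigO facts
  have hO1 : (fun z : ℂ => z⁻¹) =O[cob] (fun _ : ℂ => (1:ℂ)) := hinv.isBigO_one ℂ
  have hOrq : (fun z : ℂ => (r z + q z)⁻¹) =O[cob] (fun z : ℂ => z⁻¹) := by
    have ht : Tendsto (fun z : ℂ => z * (r z + q z)⁻¹) cob (𝓝 2⁻¹) := by
      have hc : ContinuousAt (fun u : ℂ => u⁻¹) 2 := continuousAt_inv₀ (by norm_num)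
      have h2 := hc.tendsto.comp hrq
      refine h2.congr' ?_
      filter_upwards [hne] with z hz
      simp only [Function.comp]
      rw [mul_inv, inv_inv]
      ring
    calc (fun z : ℂ => (r z + q z)⁻¹) =ᶠ[cob] fun z => z⁻¹ * (z * (r z + q z)⁻¹) := by
          filter_upwards [hne] with z hz
          rw [← mul_assoc, inv_mul_cancel₀ hz, one_mul]
      _ =O[cob] fun z : ℂ => z⁻¹ * 1 := (isBigO_refl _ _).mul (ht.isBigO_one ℂ)
      _ = fun z : ℂ => z⁻¹ := by funext z; ring
  have hOS : (fun z : ℂ => S + 2 * z) =O[cob] (fun z : ℂ => z) := by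
    calc (fun z : ℂ => S + 2 * z) =ᶠ[cob] fun z => (S * z⁻¹ + 2) * z := by
          filter_upwards [hne] with z hz
          linear_combination (-S) * mul_inv_cancel₀ hz
      _ =O[cob] fun z : ℂ => 1 * z := by
          refine IsBigO.mul ?_ (isBigO_refl _ _)
          have hc : Continuous (fun u : ℂ => S * u + 2) := by fun_prop
          have h2 := (hc.tendsto 0).comp hinv
          have h3 : (S * 0 + 2 : ℂ) = 2 := by norm_num
          rw [h3] at h2
          exact h2.isBigO_one ℂ
      _ = fun z : ℂ => z := by funext z; ring
  -- r² - q² = O(z⁻²)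
  have hL : (fun z : ℂ => r z ^ 2 - q z ^ 2) =O[cob] (fun z : ℂ => z⁻¹^2) := by
    have heq : (fun z : ℂ => r z ^ 2 - q z ^ 2) =ᶠ[cob]
        (fun z : ℂ => (-(Δ^4/64) - S^2*Δ^2/16) * z⁻¹^2 + (-(S*Δ^4/64)) * z⁻¹^3
          + (-(S^2*Δ^4/256)) * z⁻¹^4) := by
      filter_upwards [hne, hr2] with z hz h2
      rw [h2]
      simp only [hq]
      rw [ha, hb]
      linear_combination (Δ^2/4 + S*Δ^2/8 * z⁻¹) * mul_inv_cancel₀ hz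
    refine heq.trans_isBigO ?_
    have h3 : (fun z : ℂ => z⁻¹^3) =O[cob] (fun z : ℂ => z⁻¹^2) := by
      calc (fun z : ℂ => z⁻¹^3) = fun z : ℂ => z⁻¹^2 * z⁻¹ := by funext z; ring
        _ =O[cob] fun z : ℂ => z⁻¹^2 * 1 := (isBigO_refl _ _).mul hO1
        _ = fun z : ℂ => z⁻¹^2 := by funext z; ring
    have h4 : (fun z : ℂ => z⁻¹^4) =O[cob] (fun z : ℂ => z⁻¹^2) := by
      calc (fun z : ℂ => z⁻¹^4) = fun z : ℂ => z⁻¹^2 * (z⁻¹ * z⁻¹) := by funext z; ring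
        _ =O[cob] fun z : ℂ => z⁻¹^2 * (1 * 1) := (isBigO_refl _ _).mul (hO1.mul hO1)
        _ = fun z : ℂ => z⁻¹^2 := by funext z; ring
    exact (((isBigO_refl (fun z : ℂ => z⁻¹^2) cob).const_mul_left _).add
      (h3.const_mul_left _)).add (h4.const_mul_left _)
  -- final assembly
  have key : (fun z : ℂ => g' z - Complex.I * (2 * S ^ 2 + 2 * x + Δ ^ 2) / 4
        - Complex.I * S * Δ ^ 2 / (4 * z)) =ᶠ[cob]
      (fun z : ℂ => -(Complex.I * (S + 2 * z)) * ((r z ^ 2 - q z ^ 2) * (r z + q z)⁻¹)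
        + Complex.I * S^2 * Δ^2 / 16 * z⁻¹^2) := by
    filter_upwards [hne, hrqne] with z hz hz2
    have hdiff : (r z ^ 2 - q z ^ 2) * (r z + q z)⁻¹ = r z - q z := by
      linear_combination (r z - q z) * mul_inv_cancel₀ hz2
    rw [hg', hdiff]
    simp only [hq]
    linear_combination (Complex.I*Δ^2/4 + Complex.I*S*Δ^2/8 * z⁻¹) * mul_inv_cancel₀ hz
  refine key.trans_isBigO ?_
  have main : (fun z : ℂ => -(Complex.I * (S + 2 * z)) * ((r z ^ 2 - q z ^ 2) * (r z + q z)⁻¹))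
      =O[cob] (fun z : ℂ => 1 / z ^ 2) := by
    have h6 := (hOS.const_mul_left (-Complex.I)).mul (hL.mul hOrq)
    have h7 : (fun z : ℂ => z * (z⁻¹^2 * z⁻¹)) =ᶠ[cob] (fun z : ℂ => 1 / z ^ 2) := by
      filter_upwards [hne] with z hz
      rw [show z * (z⁻¹^2 * z⁻¹) = (z * z⁻¹) * z⁻¹^2 from by ring, mul_inv_cancel₀ hz,
        one_mul, inv_pow, one_div]
    refine ((h6.congr_left fun z => by ring).trans_eventuallyEq h7)
  refine main.add ?_
  refine ((isBigO_refl (fun z : ℂ => 1 / z^2) cob).const_mul_left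
    (Complex.I * S^2 * Δ^2 / 16)).congr_left fun z => ?_
  rw [one_div]; ring
end

section
/- Let x, S, Δ ∈ ℂ with S ≠ 0, S^3 + x·S − 2i = 0 and Δ² = −4i/S, and set a := (S − Δ)/2 and b := (S + Δ)/2. Define r(z) := z·((z − a)(z − b)/z²)^(1/2) using the principal complex power, and g'(z) := i·(4z² + x)/2 − i·(S + 2z)·r(z). Then g'(z) − 1/z = O(1/z²) as z → ∞ in ℂ (along the cobounded filter). -/
open Filter Bornology Asymptotics Topology Complex


/-- If `S ≠ 0`, `S³ + xS - 2i = 0`, `Δ² = -4i/S`, `a := (S-Δ)/2`,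
`b := (S+Δ)/2`, `r(z) := z ((z-a)(z-b)/z²)^(1/2)` (principal power) and
`g'(z) := i(4z²+x)/2 - i(S+2z) r(z)`, then `g'(z) - 1/z = O(1/z²)` as `z → ∞`
(cobounded filter). -/
theorem statement11 (x S Δ : ℂ) (hS : S ≠ 0)
    (hcubic : S ^ 3 + x * S - 2 * Complex.I = 0)
    (hΔ : Δ ^ 2 = -4 * Complex.I / S)
    (a b : ℂ) (ha : a = (S - Δ) / 2) (hb : b = (S + Δ) / 2)
    (r : ℂ → ℂ) (hr : ∀ z : ℂ, r z = z * (((z - a) * (z - b)) / z ^ 2) ^ ((1 : ℂ)/2))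
    (g' : ℂ → ℂ)
    (hg' : ∀ z : ℂ, g' z = Complex.I * (4 * z ^ 2 + x) / 2 - Complex.I * (S + 2 * z) * r z) :
    (fun z : ℂ => g' z - 1 / z) =O[Bornology.cobounded ℂ] (fun z : ℂ => 1 / z ^ 2) := by
  subst ha hb
  have hΔ' : Δ ^ 2 * S = -4 * Complex.I := by rw [hΔ]; field_simp
  set c : ℂ := S ^ 2 * (S ^ 2 - Δ ^ 2) / 4 - x ^ 2 / 4 with hc
  -- square of r
  have hr2 : ∀ z : ℂ, z ≠ 0 → r z ^ 2 = (z - (S - Δ)/2) * (z - (S + Δ)/2) := by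
    intro z hz
    set w : ℂ := ((z - (S - Δ)/2) * (z - (S + Δ)/2)) / z ^ 2 with hwdef
    have hsq : w ^ ((1:ℂ)/2) * w ^ ((1:ℂ)/2) = w := by
      rcases eq_or_ne w 0 with h | h
      · rw [h, Complex.zero_cpow (by norm_num), mul_zero]
      · rw [← Complex.cpow_add _ _ h]; norm_num
    rw [hr z]
    have h2 : (z * w ^ ((1:ℂ)/2)) ^ 2 = z ^ 2 * (w ^ ((1:ℂ)/2) * w ^ ((1:ℂ)/2)) := by ring
    rw [h2, hsq, hwdef]
    field_simp
  -- Id1 : g' z * AB z = 4 I z + c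
  have Id1 : ∀ z : ℂ, z ≠ 0 →
      g' z * (Complex.I * (4 * z ^ 2 + x) / 2 + Complex.I * (S + 2 * z) * r z)
        = 4 * Complex.I * z + c := by
    intro z hz
    have h2 := hr2 z hz
    have Idu : S * (((4*z^2+x)/2 - (S+2*z) * r z) * ((4*z^2+x)/2 + (S+2*z) * r z))
        = S * (-(4 * Complex.I * z + c)) := by
      rw [hc]
      linear_combination (-(S * (S + 2*z)^2)) * h2 + (2*z^2) * hcubic + (z^2 + z*S) * hΔ'
    have Idu' : ((4*z^2+x)/2 - (S+2*z) * r z) * ((4*z^2+x)/2 + (S+2*z) * r z)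
        = -(4 * Complex.I * z + c) := mul_left_cancel₀ hS Idu
    rw [hg' z]
    linear_combination (((4*z^2+x)/2 - (S+2*z) * r z) * ((4*z^2+x)/2 + (S+2*z) * r z)) * Complex.I_sq - Idu'
  -- Id2 : q z * Dp z = P z
  have Id2 : ∀ z : ℂ, z ≠ 0 →
      (2*z^2 - (S + 2*z) * r z) * (2*z^2 + (S + 2*z) * r z)
        = -2*x*z^2 - 4*Complex.I*z - S^2*(S^2 - Δ^2)/4 := by
    intro z hz
    have h2 := hr2 z hz
    have key : S * ((2*z^2 - (S + 2*z) * r z) * (2*z^2 + (S + 2*z) * r z))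
        = S * (-2*x*z^2 - 4*Complex.I*z - S^2*(S^2 - Δ^2)/4) := by
      linear_combination (-(S * (S + 2*z)^2)) * h2 + (2*z^2) * hcubic + (z^2 + z*S) * hΔ'
    exact mul_left_cancel₀ hS key
  -- basic limits
  have hz0 : ∀ᶠ z : ℂ in cobounded ℂ, z ≠ 0 := eventually_ne_cobounded 0
  have L0 : Tendsto (fun z : ℂ => z⁻¹) (cobounded ℂ) (𝓝 0) := tendsto_inv₀_cobounded
  have Lρ : Tendsto (fun z : ℂ => r z * z⁻¹) (cobounded ℂ) (𝓝 1) := by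
    have ha1 : Tendsto (fun z : ℂ => 1 - ((S - Δ)/2) * z⁻¹) (cobounded ℂ)
        (𝓝 (1 - ((S - Δ)/2) * 0)) := tendsto_const_nhds.sub (L0.const_mul _)
    have hb1 : Tendsto (fun z : ℂ => 1 - ((S + Δ)/2) * z⁻¹) (cobounded ℂ)
        (𝓝 (1 - ((S + Δ)/2) * 0)) := tendsto_const_nhds.sub (L0.const_mul _)
    have h1 : Tendsto (fun z : ℂ => (1 - ((S - Δ)/2) * z⁻¹) * (1 - ((S + Δ)/2) * z⁻¹))
        (cobounded ℂ) (𝓝 1) := by simpa using ha1.mul hb1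
    have Linner : Tendsto (fun z : ℂ => ((z - (S - Δ)/2) * (z - (S + Δ)/2)) / z ^ 2)
        (cobounded ℂ) (𝓝 1) := by
      refine h1.congr' ?_
      filter_upwards [hz0] with z hz
      have hzz : z * z⁻¹ = 1 := mul_inv_cancel₀ hz
      rw [eq_div_iff (pow_ne_zero 2 hz)]
      linear_combination (-((S - Δ)/2 + (S + Δ)/2)*z
        + ((S - Δ)/2)*((S + Δ)/2)*(1 + z*z⁻¹)) * hzz
    have h3 : Tendsto (fun z : ℂ =>
        ((z - (S - Δ)/2) * (z - (S + Δ)/2) / z ^ 2) ^ ((1:ℂ)/2)) (cobounded ℂ)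
        (𝓝 ((1:ℂ) ^ ((1:ℂ)/2))) :=
      Linner.cpow tendsto_const_nhds Complex.one_mem_slitPlane
    rw [Complex.one_cpow] at h3
    refine h3.congr' ?_
    filter_upwards [hz0] with z hz
    rw [hr z, mul_comm z _, mul_assoc, mul_inv_cancel₀ hz, mul_one]
  have LDp : Tendsto (fun z : ℂ => (2*z^2 + (S + 2*z) * r z) * (z⁻¹)^2)
      (cobounded ℂ) (𝓝 4) := by
    have hb1 : Tendsto (fun z : ℂ => S * z⁻¹ + 2) (cobounded ℂ) (𝓝 (S * 0 + 2)) :=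
      (L0.const_mul S).add tendsto_const_nhds
    have h1 : Tendsto (fun z : ℂ => 2 + (S * z⁻¹ + 2) * (r z * z⁻¹)) (cobounded ℂ)
        (𝓝 (2 + (S * 0 + 2) * 1)) := tendsto_const_nhds.add (hb1.mul Lρ)
    have h2 : (2:ℂ) + (S * 0 + 2) * 1 = 4 := by ring
    rw [h2] at h1
    refine h1.congr' ?_
    filter_upwards [hz0] with z hz
    have hzz : z * z⁻¹ = 1 := mul_inv_cancel₀ hz
    linear_combination (-2*(1 + z*z⁻¹) - 2*(r z)*z⁻¹) * hzz
  have T2 : Tendsto (fun z : ℂ => (z⁻¹)^2) (cobounded ℂ) (𝓝 0) := by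
    simpa using L0.pow 2
  have LAB : Tendsto (fun z : ℂ =>
      (Complex.I * (4 * z ^ 2 + x) / 2 + Complex.I * (S + 2 * z) * r z) * (z⁻¹)^2)
      (cobounded ℂ) (𝓝 (4 * Complex.I)) := by
    have hb1 : Tendsto (fun z : ℂ => S * z⁻¹ + 2) (cobounded ℂ) (𝓝 (S * 0 + 2)) :=
      (L0.const_mul S).add tendsto_const_nhds
    have h1 : Tendsto (fun z : ℂ =>
        2*Complex.I + Complex.I * x / 2 * (z⁻¹)^2
          + Complex.I * ((S * z⁻¹ + 2) * (r z * z⁻¹))) (cobounded ℂ)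
        (𝓝 (2*Complex.I + Complex.I * x / 2 * 0 + Complex.I * ((S * 0 + 2) * 1))) :=
      (tendsto_const_nhds.add (T2.const_mul _)).add ((hb1.mul Lρ).const_mul _)
    have h2 : 2*Complex.I + Complex.I * x / 2 * 0 + Complex.I * ((S * 0 + 2) * 1)
        = 4 * Complex.I := by ring
    rw [h2] at h1
    refine h1.congr' ?_
    filter_upwards [hz0] with z hz
    have hzz : z * z⁻¹ = 1 := mul_inv_cancel₀ hz
    linear_combination (-2*Complex.I*(1 + z*z⁻¹) - 2*Complex.I*(r z)*z⁻¹) * hzz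
  have hDne : ∀ᶠ z : ℂ in cobounded ℂ, (2*z^2 + (S + 2*z) * r z) ≠ 0 := by
    filter_upwards [LDp.eventually_ne (show (4:ℂ) ≠ 0 by norm_num)] with z h h0
    exact h (by rw [h0]; ring)
  have hABne : ∀ᶠ z : ℂ in cobounded ℂ,
      (Complex.I * (4 * z ^ 2 + x) / 2 + Complex.I * (S + 2 * z) * r z) ≠ 0 := by
    filter_upwards [LAB.eventually_ne (show (4:ℂ)*Complex.I ≠ 0 by
      simp [Complex.I_ne_zero])] with z h h0
    exact h (by rw [h0]; ring)
  have Lq : Tendsto (fun z : ℂ => 2*z^2 - (S + 2*z) * r z) (cobounded ℂ) (𝓝 (-x/2)) := by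
    have hnum : Tendsto (fun z : ℂ =>
        -2*x - 4*Complex.I*z⁻¹ - (S^2*(S^2 - Δ^2)/4) * (z⁻¹)^2) (cobounded ℂ) (𝓝 (-2*x)) := by
      have h1 : Tendsto (fun z : ℂ =>
          -2*x - 4*Complex.I*z⁻¹ - S^2*(S^2 - Δ^2)/4 * (z⁻¹)^2) (cobounded ℂ)
          (𝓝 (-2*x - 4*Complex.I*0 - S^2*(S^2 - Δ^2)/4*0)) :=
        (tendsto_const_nhds.sub (L0.const_mul _)).sub (T2.const_mul _)
      have h2 : -2*x - 4*Complex.I*0 - S^2*(S^2 - Δ^2)/4*0 = -2*x := by ring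
      rw [h2] at h1
      exact h1.congr (fun z => by ring)
    have h1 := hnum.div LDp (show (4:ℂ) ≠ 0 by norm_num)
    have h2 : (-2*x)/(4:ℂ) = -x/2 := by ring
    rw [h2] at h1
    refine h1.congr' ?_
    filter_upwards [hz0, hDne] with z hz hD
    have hI2 := Id2 z hz
    have hzz : z * z⁻¹ = 1 := mul_inv_cancel₀ hz
    simp only [Pi.div_apply]
    rw [div_eq_iff (mul_ne_zero hD (pow_ne_zero 2 (inv_ne_zero hz)))]
    linear_combination (2*x*(1 + z*z⁻¹) + 4*Complex.I*z⁻¹) * hzz - (z⁻¹)^2 * hI2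
  -- main limit
  have LF : Tendsto (fun z : ℂ => (g' z - 1/z) * z^2) (cobounded ℂ)
      (𝓝 (c / (4 * Complex.I))) := by
    have hnum : Tendsto (fun z : ℂ =>
        Complex.I * (2*z^2 - (S + 2*z) * r z) * z⁻¹ + c - Complex.I * x / 2 * z⁻¹)
        (cobounded ℂ) (𝓝 c) := by
      have h1 : Tendsto (fun z : ℂ =>
          Complex.I * (2*z^2 - (S + 2*z) * r z) * z⁻¹ + c - Complex.I * x / 2 * z⁻¹)
          (cobounded ℂ) (𝓝 (Complex.I * (-x/2) * 0 + c - Complex.I*x/2*0)) :=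
        (((Lq.const_mul _).mul L0).add tendsto_const_nhds).sub (L0.const_mul _)
      have h2 : Complex.I * (-x/2) * 0 + c - Complex.I*x/2*0 = c := by ring
      rw [h2] at h1
      exact h1
    have h1 := hnum.div LAB (show (4:ℂ)*Complex.I ≠ 0 by simp [Complex.I_ne_zero])
    refine h1.congr' ?_
    filter_upwards [hz0, hABne] with z hz hAB
    have hg1 := Id1 z hz
    have hzz : z * z⁻¹ = 1 := mul_inv_cancel₀ hz
    simp only [Pi.div_apply]
    rw [div_eq_iff (mul_ne_zero hAB (pow_ne_zero 2 (inv_ne_zero hz)))]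
    linear_combination (-2*Complex.I*z^2*z⁻¹*(1 - z*z⁻¹)
      + (Complex.I*(S + 2*z)*(r z)*z⁻¹ - c + Complex.I*x/2*z⁻¹)*(1 + z*z⁻¹)) * hzz
      - z^2*(z⁻¹)^2 * hg1
  -- conclude
  have hOF : (fun z : ℂ => (g' z - 1/z) * z^2) =O[cobounded ℂ] (fun _ : ℂ => (1:ℂ)) :=
    LF.isBigO_one ℂ
  have := hOF.mul (isBigO_refl (fun z : ℂ => 1/z^2) (cobounded ℂ))
  refine this.congr' ?_ ?_
  · filter_upwards [hz0] with z hz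
    have h2 : (z:ℂ)^2 ≠ 0 := pow_ne_zero 2 hz
    field_simp
  · filter_upwards with z
    simp
end

section
/- Let a, b ∈ ℂ and define β(z) := ((z − b)/(z − a))^(1/4) using the principal complex power. Then, as z → ∞ in ℂ (along the cobounded filter), (β(z) + β(z)⁻¹)/2 − 1 = O(1/z²), and (i/2)·(β(z) − β(z)⁻¹) − i(a − b)/(4z) − i(a² − b²)/(8z²) = O(1/z³). -/
open Filter Asymptotics Complex Bornology

private lemma exp_taylor3 :
    (fun x : ℂ => Complex.exp x - (1 + x + x ^ 2 / 2)) =O[nhds 0] fun x => x ^ 3 := by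
  rw [isBigO_iff]
  refine ⟨1, ?_⟩
  have h1 : ∀ᶠ x : ℂ in nhds 0, ‖x‖ ≤ 1 := by
    have := (continuous_norm.tendsto (0 : ℂ))
    rw [norm_zero] at this
    exact this.eventually_le_const one_pos
  filter_upwards [h1] with x hx
  have hb := Complex.exp_bound (x := x) hx (n := 3) (by norm_num)
  have hsum : (∑ m ∈ Finset.range 3, x ^ m / m.factorial) = 1 + x + x ^ 2 / 2 := by
    simp [Finset.sum_range_succ]
  rw [hsum] at hb
  have habs : ∀ y : ℂ, ‖y‖ = ‖y‖ := fun _ => rfl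
  rw [habs, habs] at hb
  calc ‖Complex.exp x - (1 + x + x ^ 2 / 2)‖
      ≤ ‖x‖ ^ 3 * ((4 : ℝ) * (((3:ℕ).factorial : ℝ) * 3)⁻¹) := hb
    _ ≤ 1 * ‖x ^ 3‖ := by
        rw [norm_pow]
        have : (((3:ℕ).factorial : ℝ) * 3)⁻¹ = 18⁻¹ := by norm_num [Nat.factorial]
        rw [this]
        nlinarith [pow_nonneg (norm_nonneg x) 3]

private lemma log_taylor3 :
    (fun t : ℂ => Complex.log (1 + t) - (t - t ^ 2 / 2)) =O[nhds 0] fun t => t ^ 3 := by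
  rw [isBigO_iff]
  refine ⟨1, ?_⟩
  have h1 : ∀ᶠ t : ℂ in nhds 0, ‖t‖ ≤ 1/2 := by
    have := (continuous_norm.tendsto (0 : ℂ))
    rw [norm_zero] at this
    exact this.eventually_le_const (by norm_num)
  filter_upwards [h1] with t ht
  have hb := Complex.norm_log_sub_logTaylor_le 2 (z := t) (by linarith)
  have hlt : logTaylor 3 t = t - t ^ 2 / 2 := by
    simp [logTaylor_succ, logTaylor_zero]
    ring
  rw [hlt] at hb
  have hinv : (1 - ‖t‖)⁻¹ ≤ 2 := by
    rw [inv_le_comm₀ (by linarith) (by norm_num)]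
    linarith
  calc ‖Complex.log (1 + t) - (t - t ^ 2 / 2)‖ ≤ ‖t‖ ^ (2+1) * (1 - ‖t‖)⁻¹ / (2+1) := hb
    _ ≤ 1 * ‖t ^ 3‖ := by
        rw [norm_pow]
        have h3 : (0:ℝ) ≤ ‖t‖ ^ 3 := by positivity
        nlinarith

private lemma cpow_taylor3 (c : ℂ) :
    (fun t : ℂ => (1 + t) ^ c - (1 + c * t + c * (c - 1) / 2 * t ^ 2))
      =O[nhds 0] fun t => t ^ 3 := by
  have hsmall : ∀ᶠ t : ℂ in nhds 0, ‖t‖ ≤ 1/2 := by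
    have := (continuous_norm.tendsto (0 : ℂ))
    rw [norm_zero] at this
    exact this.eventually_le_const (by norm_num)
  have hlogO : (fun t : ℂ => Complex.log (1 + t)) =O[nhds 0] fun t => t := by
    rw [isBigO_iff]
    refine ⟨3/2, ?_⟩
    filter_upwards [hsmall] with t ht
    exact Complex.norm_log_one_add_half_le_self ht
  have hlog0 : Tendsto (fun t : ℂ => Complex.log (1 + t)) (nhds 0) (nhds 0) := by
    have hc : ContinuousAt (fun t : ℂ => Complex.log (1 + t)) 0 :=
      (continuousAt_clog (by simp [Complex.slitPlane])).comp
        ((continuous_const.add continuous_id).continuousAt)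
    simpa using hc.tendsto
  have hx0 : Tendsto (fun t : ℂ => c * Complex.log (1 + t)) (nhds 0) (nhds 0) := by
    simpa using hlog0.const_mul c
  have hxO : (fun t : ℂ => c * Complex.log (1 + t)) =O[nhds 0] fun t => t :=
    hlogO.const_mul_left c
  have h1 : (fun t : ℂ => Complex.exp (c * Complex.log (1 + t))
      - (1 + c * Complex.log (1 + t) + (c * Complex.log (1 + t)) ^ 2 / 2))
      =O[nhds 0] fun t => t ^ 3 :=
    (exp_taylor3.comp_tendsto hx0).trans (hxO.pow 3)
  have h2 : (fun t : ℂ => c * Complex.log (1 + t) - c * (t - t ^ 2 / 2))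
      =O[nhds 0] fun t => t ^ 3 := by
    have := log_taylor3.const_mul_left c
    exact this.congr_left (fun t => by ring)
  have hbdd : (fun t : ℂ => c * Complex.log (1 + t) + c * (t - t ^ 2 / 2)) =O[nhds 0]
      (fun _ => (1 : ℂ)) := by
    have : Tendsto (fun t : ℂ => c * Complex.log (1 + t) + c * (t - t ^ 2 / 2)) (nhds 0)
        (nhds 0) := by
      have h2' : Tendsto (fun t : ℂ => c * (t - t ^ 2 / 2)) (nhds 0) (nhds 0) := by
        have hc : Continuous (fun t : ℂ => c * (t - t ^ 2 / 2)) := by continuity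
        simpa using hc.tendsto 0
      simpa using hx0.add h2'
    exact this.isBigO_one ℂ
  have h3 : (fun t : ℂ => (c * Complex.log (1 + t)) ^ 2 / 2 - (c * (t - t ^ 2 / 2)) ^ 2 / 2)
      =O[nhds 0] fun t => t ^ 3 := by
    have hm := h2.mul hbdd
    have heq : (fun t : ℂ => t ^ 3 * 1) = fun t : ℂ => t ^ 3 := by funext t; ring
    rw [heq] at hm
    exact (hm.const_mul_left (1/2)).congr_left (fun t => by ring)
  have h4 : (fun t : ℂ => (1 + c * (t - t ^ 2 / 2) + (c * (t - t ^ 2 / 2)) ^ 2 / 2)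
      - (1 + c * t + c * (c - 1) / 2 * t ^ 2)) =O[nhds 0] fun t => t ^ 3 := by
    have hb : (fun t : ℂ => c ^ 2 / 2 * (-1 + t / 4)) =O[nhds 0] (fun _ => (1:ℂ)) := by
      have hc : Continuous (fun t : ℂ => c ^ 2 / 2 * (-1 + t / 4)) := by continuity
      exact (hc.tendsto 0).isBigO_one ℂ
    have hm := (isBigO_refl (fun t : ℂ => t ^ 3) (nhds 0)).mul hb
    have heq : (fun t : ℂ => t ^ 3 * 1) = fun t : ℂ => t ^ 3 := by funext t; ring
    rw [heq] at hm
    exact hm.congr_left (fun t => by ring)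
  have hsumO := ((h1.add h2).add h3).add h4
  refine EventuallyEq.trans_isBigO ?_ hsumO
  filter_upwards [hsmall] with t ht
  have hne : (1 : ℂ) + t ≠ 0 := by
    intro h
    have h0 : ‖(1 : ℂ) + t‖ = 0 := by rw [h]; simp
    have h1' : (1:ℝ) ≤ ‖(1:ℂ) + t‖ + ‖t‖ := by
      calc (1:ℝ) = ‖(1:ℂ)‖ := by simp
        _ = ‖(1 + t) + (-t)‖ := by ring_nf
        _ ≤ ‖(1:ℂ) + t‖ + ‖t‖ := by simpa using norm_add_le ((1:ℂ)+t) (-t)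
    rw [h0] at h1'
    linarith
  rw [Complex.cpow_def_of_ne_zero hne, mul_comm (Complex.log (1 + t)) c]
  ring

/-- With `β(z) := ((z-b)/(z-a))^(1/4)` (principal power), as `z → ∞`
(cobounded filter): `(β(z)+β(z)⁻¹)/2 - 1 = O(1/z²)` and
`(i/2)(β(z)-β(z)⁻¹) - i(a-b)/(4z) - i(a²-b²)/(8z²) = O(1/z³)`. -/
theorem statement12 (a b : ℂ) (β : ℂ → ℂ)
    (hβ : ∀ z : ℂ, β z = ((z - b) / (z - a)) ^ ((1 : ℂ)/4)) :
    ((fun z : ℂ => (β z + (β z)⁻¹) / 2 - 1)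
        =O[Bornology.cobounded ℂ] (fun z : ℂ => 1 / z ^ 2)) ∧
    ((fun z : ℂ => Complex.I / 2 * (β z - (β z)⁻¹)
          - Complex.I * (a - b) / (4 * z) - Complex.I * (a ^ 2 - b ^ 2) / (8 * z ^ 2))
        =O[Bornology.cobounded ℂ] (fun z : ℂ => 1 / z ^ 3)) := by
  set T : ℂ → ℂ := fun w => (a - b) * w / (1 - a * w) with hTdef
  -- basic facts about T near 0
  have hg : Tendsto (fun w : ℂ => (a - b) / (1 - a * w)) (nhds 0)
      (nhds ((a - b) / (1 - a * 0))) := by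
    apply Tendsto.div tendsto_const_nhds
    · exact ((continuous_const.sub (continuous_const.mul continuous_id)).tendsto 0)
    · simp
  have htO : T =O[nhds 0] fun w : ℂ => w := by
    have hm := (isBigO_refl (fun w : ℂ => w) (nhds 0)).mul (hg.isBigO_one ℂ)
    exact hm.congr (fun w => by rw [hTdef]; ring) (fun w => by ring)
  have ht0 : Tendsto T (nhds 0) (nhds 0) := by
    have := (tendsto_id (x := nhds (0:ℂ))).mul hg
    rw [zero_mul] at this
    exact this.congr (fun w => by simp only [id_eq]; rw [hTdef]; ring)
  have hcomp : ∀ c : ℂ,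
      (fun w : ℂ => (1 + T w) ^ c - (1 + c * T w + c * (c - 1) / 2 * T w ^ 2))
        =O[nhds 0] fun w => w ^ 3 :=
    fun c => ((cpow_taylor3 c).comp_tendsto ht0).trans (htO.pow 3)
  have hsmall : ∀ᶠ w : ℂ in nhds 0, ‖a * w‖ < 1 := by
    have hc : Continuous (fun w : ℂ => ‖a * w‖) := by continuity
    have := hc.tendsto 0
    simp only [mul_zero, norm_zero] at this
    exact this.eventually_lt_const one_pos
  have h32 : (fun w : ℂ => w ^ 3) =O[nhds 0] fun w => w ^ 2 := by
    rw [isBigO_iff]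
    refine ⟨1, ?_⟩
    have h1 : ∀ᶠ w : ℂ in nhds 0, ‖w‖ ≤ 1 := by
      have := (continuous_norm.tendsto (0 : ℂ))
      rw [norm_zero] at this
      exact this.eventually_le_const one_pos
    filter_upwards [h1] with w hw
    rw [norm_pow, norm_pow]
    calc ‖w‖ ^ 3 = ‖w‖ ^ 2 * ‖w‖ := by ring
      _ ≤ ‖w‖ ^ 2 * 1 := by nlinarith [norm_nonneg w, sq_nonneg ‖w‖]
      _ = 1 * ‖w‖ ^ 2 := by ring
  -- Part 1 on nhds 0
  have hplus := (hcomp ((1:ℂ)/4)).add (hcomp (-((1:ℂ)/4)))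
  have hsum1 : (fun w : ℂ => ((1 + T w) ^ ((1:ℂ)/4) + (1 + T w) ^ (-((1:ℂ)/4))) / 2 - 1
      - T w ^ 2 / 32) =O[nhds 0] fun w => w ^ 3 := by
    refine (hplus.const_mul_left (1/2)).congr_left fun w => ?_
    generalize (1 + T w) ^ ((1:ℂ)/4) = P
    generalize (1 + T w) ^ (-((1:ℂ)/4)) = Q
    ring
  have hT2 : (fun w : ℂ => T w ^ 2 / 32) =O[nhds 0] fun w => w ^ 2 := by
    have := (htO.pow 2).const_mul_left (1/32)
    exact this.congr_left fun w => by ring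
  have H1 : (fun w : ℂ => ((1 + T w) ^ ((1:ℂ)/4) + (1 + T w) ^ (-((1:ℂ)/4))) / 2 - 1)
      =O[nhds 0] fun w => w ^ 2 := by
    have := (hsum1.trans h32).add hT2
    exact this.congr_left fun w => by ring
  -- Part 2 on nhds 0
  have hdiff : (fun w : ℂ => Complex.I / 2 * ((1 + T w) ^ ((1:ℂ)/4) - (1 + T w) ^ (-((1:ℂ)/4)))
      - (Complex.I / 4 * T w - Complex.I / 8 * T w ^ 2)) =O[nhds 0] fun w => w ^ 3 := by
    have hm := ((hcomp ((1:ℂ)/4)).sub (hcomp (-((1:ℂ)/4)))).const_mul_left (Complex.I / 2)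
    refine hm.congr_left fun w => ?_
    generalize (1 + T w) ^ ((1:ℂ)/4) = P
    generalize (1 + T w) ^ (-((1:ℂ)/4)) = Q
    ring
  have hA : (fun w : ℂ => Complex.I / 4 * T w - Complex.I * (a - b) * w / 4
      - Complex.I * a * (a - b) * w ^ 2 / 4) =O[nhds 0] fun w => w ^ 3 := by
    have hb : Tendsto (fun w : ℂ => Complex.I * (a - b) * a ^ 2 / 4 / (1 - a * w)) (nhds 0)
        (nhds (Complex.I * (a - b) * a ^ 2 / 4 / (1 - a * 0))) := by
      apply Tendsto.div tendsto_const_nhds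
      · exact ((continuous_const.sub (continuous_const.mul continuous_id)).tendsto 0)
      · simp
    have hm := (isBigO_refl (fun w : ℂ => w ^ 3) (nhds 0)).mul (hb.isBigO_one ℂ)
    have hm' := hm.congr_right (fun w : ℂ => mul_one (w ^ 3))
    refine EventuallyEq.trans_isBigO ?_ hm'
    filter_upwards [hsmall] with w hw
    have hne : 1 - a * w ≠ 0 := by
      intro h
      rw [sub_eq_zero] at h
      rw [← h] at hw
      simp at hw
    rw [hTdef]
    field_simp
    ring
  have hB : (fun w : ℂ => Complex.I / 8 * T w ^ 2 - Complex.I * (a - b) ^ 2 * w ^ 2 / 8)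
      =O[nhds 0] fun w => w ^ 3 := by
    have hb : Tendsto (fun w : ℂ => Complex.I * (a - b) ^ 2 * (2 * a - a ^ 2 * w) / 8
        / (1 - a * w) ^ 2) (nhds 0)
        (nhds (Complex.I * (a - b) ^ 2 * (2 * a - a ^ 2 * 0) / 8 / (1 - a * 0) ^ 2)) := by
      apply Tendsto.div
      · exact ((continuous_const.mul (continuous_const.sub
          (continuous_const.mul continuous_id))).div_const 8).tendsto 0
      · exact (((continuous_const.sub (continuous_const.mul continuous_id)).pow 2).tendsto 0)
      · simp
    have hm := (isBigO_refl (fun w : ℂ => w ^ 3) (nhds 0)).mul (hb.isBigO_one ℂ)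
    have hm' := hm.congr_right (fun w : ℂ => mul_one (w ^ 3))
    refine EventuallyEq.trans_isBigO ?_ hm'
    filter_upwards [hsmall] with w hw
    have hne : 1 - a * w ≠ 0 := by
      intro h
      rw [sub_eq_zero] at h
      rw [← h] at hw
      simp at hw
    rw [hTdef]
    field_simp
    ring
  have H2 : (fun w : ℂ => Complex.I / 2 * ((1 + T w) ^ ((1:ℂ)/4) - (1 + T w) ^ (-((1:ℂ)/4)))
      - Complex.I * (a - b) * w / 4 - Complex.I * (a ^ 2 - b ^ 2) * w ^ 2 / 8)
      =O[nhds 0] fun w => w ^ 3 := by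
    have := (hdiff.add hA).sub hB
    refine this.congr_left fun w => ?_
    generalize (1 + T w) ^ ((1:ℂ)/4) = P
    generalize (1 + T w) ^ (-((1:ℂ)/4)) = Q
    ring
  -- Transfer to cobounded
  have hinv : Tendsto (fun z : ℂ => z⁻¹) (cobounded ℂ) (nhds 0) := tendsto_inv₀_cobounded
  have hev : ∀ᶠ z : ℂ in cobounded ℂ, max ‖a‖ 0 < ‖z‖ :=
    tendsto_norm_cobounded_atTop.eventually (eventually_gt_atTop (max ‖a‖ 0))
  have key : ∀ z : ℂ, max ‖a‖ 0 < ‖z‖ →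
      β z = (1 + T z⁻¹) ^ ((1:ℂ)/4) := by
    intro z hz
    have hz0 : z ≠ 0 := by
      intro h
      rw [h, norm_zero] at hz
      exact absurd ((le_max_right ‖a‖ 0).trans_lt hz) (lt_irrefl 0)
    have hza : z - a ≠ 0 := by
      intro h
      rw [sub_eq_zero] at h
      rw [h] at hz
      exact absurd (le_max_left ‖a‖ 0) (not_le.mpr hz)
    have hne : 1 - a * z⁻¹ ≠ 0 := by
      have hfe : 1 - a * z⁻¹ = (z - a) * z⁻¹ := by field_simp
      rw [hfe]
      exact mul_ne_zero hza (inv_ne_zero hz0)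
    have hbase : (z - b) / (z - a) = 1 + T z⁻¹ := by
      rw [hTdef]
      field_simp
      ring
    rw [hβ, hbase]
  constructor
  · have K1 := H1.comp_tendsto hinv
    have K1' := K1.congr (f₂ := fun z : ℂ =>
        ((1 + T z⁻¹) ^ ((1:ℂ)/4) + (1 + T z⁻¹) ^ (-((1:ℂ)/4))) / 2 - 1)
      (fun z => rfl) (fun z : ℂ => by
        show (z⁻¹) ^ 2 = 1 / z ^ 2
        rw [inv_pow, one_div])
    refine EventuallyEq.trans_isBigO ?_ K1'
    filter_upwards [hev] with z hz
    rw [key z hz, Complex.cpow_neg]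
  · have K2 := H2.comp_tendsto hinv
    have K2' := K2.congr (f₂ := fun z : ℂ =>
        Complex.I / 2 * ((1 + T z⁻¹) ^ ((1:ℂ)/4) - (1 + T z⁻¹) ^ (-((1:ℂ)/4)))
          - Complex.I * (a - b) * z⁻¹ / 4 - Complex.I * (a ^ 2 - b ^ 2) * (z⁻¹) ^ 2 / 8)
      (fun z => rfl) (fun z : ℂ => by
        show (z⁻¹) ^ 3 = 1 / z ^ 3
        rw [inv_pow, one_div])
    refine EventuallyEq.trans_isBigO ?_ K2'
    filter_upwards [hev] with z hz
    have hz0 : z ≠ 0 := by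
      intro h
      rw [h, norm_zero] at hz
      exact absurd ((le_max_right ‖a‖ 0).trans_lt hz) (lt_irrefl 0)
    rw [key z hz, Complex.cpow_neg]
    generalize ((1 + T z⁻¹) ^ ((1:ℂ)/4)) = P
    field_simp
end

section
/- Let U ⊆ ℂ be an open preconnected set that is invariant under the reflection σ(z) := −conj(z) and contains at least one fixed point of σ (i.e., a purely imaginary point). Let h be holomorphic on U and suppose that for all z ∈ U, the real part of h'(z) + h'(σ(z)) is zero and the imaginary part of h'(z) − h'(σ(z)) is zero. Then Re(h(σ(z))) = Re(h(z)) for all z ∈ U. -/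
open Complex

lemma conj_reflect_hasDerivAt {f : ℂ → ℂ} {d : ℂ} (z : ℂ)
    (hf : HasDerivAt f d (-(starRingEnd ℂ) z)) :
    HasDerivAt (fun w => (starRingEnd ℂ) (f (-(starRingEnd ℂ) w))) (-(starRingEnd ℂ) d) z := by
  set A : ℂ →L[ℝ] ℂ := Complex.conjCLE.toContinuousLinearMap
  have hA : ∀ w, A w = (starRingEnd ℂ) w := fun w => rfl
  have hinner : HasFDerivAt (fun w : ℂ => -(starRingEnd ℂ) w) (-A) z := by
    have := (-A).hasFDerivAt (x := z)
    exact this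
  have hmid : HasFDerivAt (fun w : ℂ => f (-(starRingEnd ℂ) w))
      ((((1 : ℂ →L[ℂ] ℂ).smulRight d).restrictScalars ℝ).comp (-A)) z :=
    (hf.hasFDerivAt.restrictScalars ℝ).comp z hinner
  have houter : HasFDerivAt (fun w : ℂ => (starRingEnd ℂ) (f (-(starRingEnd ℂ) w)))
      (A.comp ((((1 : ℂ →L[ℂ] ℂ).smulRight d).restrictScalars ℝ).comp (-A))) z :=
    (A.hasFDerivAt).comp z hmid
  have heq : (((1 : ℂ →L[ℂ] ℂ).smulRight (-(starRingEnd ℂ) d)).restrictScalars ℝ)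
      = A.comp ((((1 : ℂ →L[ℂ] ℂ).smulRight d).restrictScalars ℝ).comp (-A)) := by
    ext
    simp [A]
  rw [hasDerivAt_iff_hasFDerivAt]
  exact hasFDerivAt_of_restrictScalars ℝ houter heq

/-- Let `U ⊆ ℂ` be open and preconnected, invariant under the reflection
`σ(z) = -conj z`, and containing a fixed point of `σ`. If `h` is holomorphic on `U` and
for all `z ∈ U` the real part of `h'(z) + h'(σ z)` and the imaginary part of
`h'(z) - h'(σ z)` vanish, then `Re (h (σ z)) = Re (h z)` for all `z ∈ U`. -/
theorem statement16 (U : Set ℂ) (hU : IsOpen U) (hUconn : IsPreconnected U)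
    (hUsym : ∀ z ∈ U, -(starRingEnd ℂ) z ∈ U)
    (hUfix : ∃ z ∈ U, -(starRingEnd ℂ) z = z)
    (h : ℂ → ℂ) (hh : DifferentiableOn ℂ h U)
    (hsym : ∀ z ∈ U, (deriv h z + deriv h (-(starRingEnd ℂ) z)).re = 0 ∧
      (deriv h z - deriv h (-(starRingEnd ℂ) z)).im = 0) :
    ∀ z ∈ U, (h (-(starRingEnd ℂ) z)).re = (h z).re := by
  set g : ℂ → ℂ := fun z => h z - (starRingEnd ℂ) (h (-(starRingEnd ℂ) z)) with hg
  -- g has derivative 0 on U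
  have key : ∀ z ∈ U, HasDerivAt g 0 z := by
    intro z hz
    have hz' : -(starRingEnd ℂ) z ∈ U := hUsym z hz
    have hd1 : HasDerivAt h (deriv h z) z :=
      (hh.differentiableAt (hU.mem_nhds hz)).hasDerivAt
    have hd2 : HasDerivAt h (deriv h (-(starRingEnd ℂ) z)) (-(starRingEnd ℂ) z) :=
      (hh.differentiableAt (hU.mem_nhds hz')).hasDerivAt
    have hcomp := conj_reflect_hasDerivAt z hd2
    have := hd1.sub hcomp
    have hzero : deriv h z - -(starRingEnd ℂ) (deriv h (-(starRingEnd ℂ) z)) = 0 := by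
      obtain ⟨h1, h2⟩ := hsym z hz
      apply Complex.ext
      · simpa using h1
      · simp at h2 ⊢; linarith
    rwa [hzero] at this
  have hgdiff : DifferentiableOn ℂ g U := fun z hz =>
    ((key z hz).differentiableAt).differentiableWithinAt
  have hfd : ∀ z ∈ U, fderiv ℂ g z = 0 := by
    intro z hz
    rw [((key z hz).hasFDerivAt).fderiv]
    ext
    simp
  obtain ⟨z₀, hz₀U, hz₀fix⟩ := hUfix
  -- g is eventually constant near z₀
  obtain ⟨ε, hε, hball⟩ := Metric.isOpen_iff.mp hU z₀ hz₀U
  have hconst : ∀ x ∈ Metric.ball z₀ ε, g x = g z₀ := by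
    intro x hx
    refine (convex_ball z₀ ε).is_const_of_fderivWithin_eq_zero
      (hgdiff.mono hball) ?_ hx (Metric.mem_ball_self hε)
    intro y hy
    rw [fderivWithin_of_isOpen Metric.isOpen_ball hy]
    exact hfd y (hball hy)
  have hev : g =ᶠ[nhds z₀] fun _ => g z₀ :=
    Filter.eventuallyEq_of_mem (Metric.ball_mem_nhds z₀ hε) hconst
  have heqon : Set.EqOn g (fun _ => g z₀) U :=
    (hgdiff.analyticOnNhd hU).eqOn_of_preconnected_of_eventuallyEq
      analyticOnNhd_const hUconn hz₀U hev
  intro z hz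
  have h1 : g z = g z₀ := heqon hz
  have h2 : (g z₀).re = 0 := by
    simp only [hg, hz₀fix]
    simp
  have := congrArg Complex.re h1
  rw [h2] at this
  simp only [hg, Complex.sub_re, Complex.conj_re] at this
  linarith
end
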